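/- arXiv:1101.3965 — 2 statements merged into one kernel-verified Lean document; each statement's English description precedes it below -/
import Mathlib

section
/- For every integer k ≥ 1, the function x ↦ (1 − x^{3k/2} − (1−x)^{3k/2}) / √(2π x^3 (1−x)^3) is integrable on (0,1) and ∫_0^1 (1 − x^{3k/2} − (1−x)^{3k/2}) / √(2π x^3 (1−x)^3) dx = 2^{3/2} Γ((3k−1)/2) / Γ(3k/2 − 1). -/
open MeasureTheory Real Set Filter Topology

/-!
Write `F(x) = 1 - x^s - (1-x)^s` with `s = 3k/2`. Since `0 ≤ F(x) ≤ 2s x(1-x)`, the integrand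
is dominated by a multiple of `x^{-1/2}(1-x)^{-1/2}`. The kernel `x^{-3/2}(1-x)^{-3/2}` has the
explicit primitive `G(x) = 2(2x-1)/√(x(1-x))`, and `F G` vanishes at both endpoints, so integrating by parts
gives `∫ F G' = -∫ F' G`. Expanding `F' G` produces four Beta integrals, whose Gamma values combine
to `4√π Γ(s-1/2)/Γ(s-1)`.
-/

theorem ofReal_rpow_mul_one_sub_rpow {x : ℝ} (hx : x ∈ Icc 0 1) (p q : ℝ) :
    ((x ^ p * (1 - x) ^ q : ℝ) : ℂ) =
      (x : ℂ) ^ ((p + 1 : ℂ) - 1) * (1 - (x : ℂ)) ^ ((q + 1 : ℂ) - 1) := by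
  rw [Complex.ofReal_mul, Complex.ofReal_cpow hx.1, Complex.ofReal_cpow (sub_nonneg.2 hx.2)]
  push_cast
  ring_nf

theorem integrableOn_rpow_mul_one_sub_rpow {p q : ℝ} (hp : -1 < p) (hq : -1 < q) :
    IntegrableOn (fun x : ℝ => x ^ p * (1 - x) ^ q) (Ioo 0 1) := by
  have hc := (intervalIntegrable_iff_integrableOn_Ioo_of_le zero_le_one).1 <|
    Complex.betaIntegral_convergent (u := p + 1) (v := q + 1) (by simpa using by linarith)
      (by simpa using by linarith)
  refine IntegrableOn.congr_fun hc.re (fun x hx => ?_) measurableSet_Ioo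
  rw [← ofReal_rpow_mul_one_sub_rpow (Ioo_subset_Icc_self hx)]
  exact Complex.ofReal_re _

theorem integral_rpow_mul_one_sub_rpow {p q : ℝ} (hp : -1 < p) (hq : -1 < q) :
    ∫ x in Ioo 0 1, x ^ p * (1 - x) ^ q = Gamma (p + 1) * Gamma (q + 1) / Gamma (p + q + 2) := by
  have hbeta : Complex.betaIntegral (p + 1) (q + 1) =
      ((∫ x in Ioo 0 1, x ^ p * (1 - x) ^ q : ℝ) : ℂ) := by
    rw [Complex.betaIntegral, ← integral_Ioc_eq_integral_Ioo,
      ← intervalIntegral.integral_of_le zero_le_one, ← intervalIntegral.integral_ofReal]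
    refine intervalIntegral.integral_congr fun x hx => ?_
    rw [uIcc_of_le zero_le_one] at hx
    exact (ofReal_rpow_mul_one_sub_rpow hx p q).symm
  have h := Complex.Gamma_mul_Gamma_eq_betaIntegral (s := p + 1) (t := q + 1)
    (by simpa using by linarith) (by simpa using by linarith)
  rw [hbeta, show (p + 1 : ℂ) + (q + 1) = ((p + q + 2 : ℝ) : ℂ) by push_cast; ring,
    show (p + 1 : ℂ) = ((p + 1 : ℝ) : ℂ) by push_cast; ring,
    show (q + 1 : ℂ) = ((q + 1 : ℝ) : ℂ) by push_cast; ring,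
    Complex.Gamma_ofReal, Complex.Gamma_ofReal, Complex.Gamma_ofReal] at h
  rw [eq_div_iff (Gamma_pos_of_pos (by linarith)).ne']
  exact_mod_cast (h.trans (mul_comm _ _)).symm

theorem integral_Ioo_mul_deriv_eq_neg_deriv_mul {u v u' v' : ℝ → ℝ} {a b : ℝ} (hab : a < b)
    (hu : ∀ x ∈ Ioo a b, HasDerivAt u (u' x) x) (hv : ∀ x ∈ Ioo a b, HasDerivAt v (v' x) x)
    (huv' : IntegrableOn (fun x => u x * v' x) (Ioo a b))
    (hu'v : IntegrableOn (fun x => u' x * v x) (Ioo a b))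
    (ha : Tendsto (fun x => u x * v x) (𝓝[>] a) (𝓝 0))
    (hb : Tendsto (fun x => u x * v x) (𝓝[<] b) (𝓝 0)) :
    ∫ x in Ioo a b, u x * v' x = -∫ x in Ioo a b, u' x * v x := by
  have hFTC := intervalIntegral.integral_eq_sub_of_hasDerivAt_of_tendsto hab
    (fun x hx => (hu x hx).mul (hv x hx))
    ((intervalIntegrable_iff_integrableOn_Ioo_of_le hab.le).2 (hu'v.add huv')) ha hb
  rw [intervalIntegral.integral_of_le hab.le, integral_Ioc_eq_integral_Ioo,
    integral_add hu'v huv', sub_zero] at hFTC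
  linarith

theorem rpow_eq_rpow_mul_self {y : ℝ} (hy : y ≠ 0) (p q : ℝ) (h : p = q + 1) :
    y ^ p = y ^ q * y :=
  h ▸ rpow_add_one hy q

theorem hasDerivAt_rpow_mul_one_sub_rpow {x : ℝ} (hx : x ∈ Ioo 0 1) (a b : ℝ) :
    HasDerivAt (fun y => y ^ a * (1 - y) ^ b)
      (a * x ^ (a - 1) * (1 - x) ^ b - b * x ^ a * (1 - x) ^ (b - 1)) x := by
  have h1 : HasDerivAt (fun y : ℝ => (1 - y) ^ b) (b * (1 - x) ^ (b - 1) * -1) x :=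
    (hasDerivAt_rpow_const (Or.inl (sub_pos.2 hx.2).ne')).comp x
      ((hasDerivAt_id x).const_sub 1 |>.congr_deriv (by simp))
  exact ((hasDerivAt_rpow_const (p := a) (Or.inl hx.1.ne')).mul h1).congr_deriv (by ring)

/-- The primitive `G(x) = 2(2x-1)/√(x(1-x))` of the kernel, written with `rpow`. -/
noncomputable def kernelPrimitive (x : ℝ) : ℝ :=
  2 * (x ^ (1 / 2 : ℝ) * (1 - x) ^ (-1 / 2 : ℝ) - x ^ (-1 / 2 : ℝ) * (1 - x) ^ (1 / 2 : ℝ))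

theorem hasDerivAt_kernelPrimitive {x : ℝ} (hx : x ∈ Ioo 0 1) :
    HasDerivAt kernelPrimitive (x ^ (-3 / 2 : ℝ) * (1 - x) ^ (-3 / 2 : ℝ)) x := by
  have h := ((hasDerivAt_rpow_mul_one_sub_rpow hx (1 / 2) (-1 / 2)).sub
    (hasDerivAt_rpow_mul_one_sub_rpow hx (-1 / 2) (1 / 2))).const_mul 2
  have hx₀ := hx.1.ne'
  have hx₁ := (sub_pos.2 hx.2).ne'
  rw [show (1 / 2 : ℝ) - 1 = -1 / 2 by norm_num, show (-1 / 2 : ℝ) - 1 = -3 / 2 by norm_num,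
    rpow_eq_rpow_mul_self hx₀ (1 / 2) (-1 / 2) (by norm_num),
    rpow_eq_rpow_mul_self hx₁ (1 / 2) (-1 / 2) (by norm_num),
    rpow_eq_rpow_mul_self hx₀ (-1 / 2) (-3 / 2) (by norm_num),
    rpow_eq_rpow_mul_self hx₁ (-1 / 2) (-3 / 2) (by norm_num)] at h
  -- the derivative equals the kernel times `(x + (1 - x))²`
  exact h.congr_deriv (by ring)

theorem one_sub_rpow_sub_one_sub_rpow_nonneg {s x : ℝ} (hs : 1 ≤ s) (hx : x ∈ Icc 0 1) :
    0 ≤ 1 - x ^ s - (1 - x) ^ s := by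
  have h1 := rpow_le_self_of_le_one hx.1 hx.2 hs
  have h2 := rpow_le_self_of_le_one (sub_nonneg.2 hx.2) (sub_le_self 1 hx.1) hs
  linarith

theorem one_sub_rpow_sub_one_sub_rpow_le {s x : ℝ} (hs : 1 ≤ s) (hx : x ∈ Icc 0 1) :
    1 - x ^ s - (1 - x) ^ s ≤ 2 * s * (x * (1 - x)) := by
  have bernoulli (y : ℝ) (hy : y ∈ Icc (0 : ℝ) 1) : 1 - s * y ≤ (1 - y) ^ s := by
    simpa [sub_eq_add_neg] using
      one_add_mul_self_le_rpow_one_add (s := -y) (by linarith [hy.2]) hs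
  have h1 := bernoulli x hx
  have h2 := bernoulli (1 - x) ⟨sub_nonneg.2 hx.2, sub_le_self 1 hx.1⟩
  rw [sub_sub_cancel] at h2
  have h3 := rpow_nonneg hx.1 s
  have h4 := rpow_nonneg (sub_nonneg.2 hx.2) s
  -- `F ≤ s min(x, 1 - x)` by Bernoulli, and `min(x, 1 - x) ≤ 2 x (1 - x)`
  rcases le_total x (1 / 2) with h | h <;> nlinarith [hx.1, hx.2]

theorem hasDerivAt_one_sub_rpow_sub_one_sub_rpow {s x : ℝ} (hx : x ∈ Ioo 0 1) :
    HasDerivAt (fun y => 1 - y ^ s - (1 - y) ^ s)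
      (s * (1 - x) ^ (s - 1) - s * x ^ (s - 1)) x := by
  have h1 : HasDerivAt (fun y : ℝ => (1 - y) ^ s) (s * (1 - x) ^ (s - 1) * -1) x :=
    (hasDerivAt_rpow_const (Or.inl (sub_pos.2 hx.2).ne')).comp x
      ((hasDerivAt_id x).const_sub 1 |>.congr_deriv (by simp))
  exact (((hasDerivAt_const x 1).sub (hasDerivAt_rpow_const (p := s) (Or.inl hx.1.ne'))).sub
    h1).congr_deriv (by ring)

theorem integrableOn_one_sub_rpow_sub_one_sub_rpow_mul {s : ℝ} (hs : 1 ≤ s) :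
    IntegrableOn
      (fun x : ℝ => (1 - x ^ s - (1 - x) ^ s) * (x ^ (-3 / 2 : ℝ) * (1 - x) ^ (-3 / 2 : ℝ)))
      (Ioo 0 1) := by
  refine Integrable.mono' ((integrableOn_rpow_mul_one_sub_rpow (p := -1 / 2) (q := -1 / 2)
    (by norm_num) (by norm_num)).const_mul (2 * s)) ?_ ?_
  · refine ContinuousOn.aestronglyMeasurable
      (fun x hx => ContinuousAt.continuousWithinAt ?_) measurableSet_Ioo
    have := hx.1.ne'
    have := (sub_pos.2 hx.2).ne'
    fun_prop (disch := simp [*])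
  · refine (ae_restrict_iff' measurableSet_Ioo).2 (Eventually.of_forall fun x hx => ?_)
    have hx₀ := hx.1
    have hx₁ := sub_pos.2 hx.2
    rw [rpow_eq_rpow_mul_self hx₀.ne' (-1 / 2) (-3 / 2) (by norm_num),
      rpow_eq_rpow_mul_self hx₁.ne' (-1 / 2) (-3 / 2) (by norm_num), norm_mul,
      Real.norm_of_nonneg (one_sub_rpow_sub_one_sub_rpow_nonneg hs (Ioo_subset_Icc_self hx)),
      Real.norm_of_nonneg (by positivity)]
    calc _ ≤ 2 * s * (x * (1 - x)) * (x ^ (-3 / 2 : ℝ) * (1 - x) ^ (-3 / 2 : ℝ)) := by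
          gcongr
          exact one_sub_rpow_sub_one_sub_rpow_le hs (Ioo_subset_Icc_self hx)
      _ = _ := by ring

theorem abs_one_sub_rpow_sub_one_sub_rpow_mul_kernelPrimitive_le {s x : ℝ} (hs : 1 ≤ s)
    (hx : x ∈ Ioo 0 1) :
    |(1 - x ^ s - (1 - x) ^ s) * kernelPrimitive x| ≤
      4 * s * (x ^ (3 / 2 : ℝ) * (1 - x) ^ (1 / 2 : ℝ) +
        x ^ (1 / 2 : ℝ) * (1 - x) ^ (3 / 2 : ℝ)) := by
  have hx₀ := hx.1
  have hx₁ := sub_pos.2 hx.2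
  have hG : |kernelPrimitive x| ≤ 2 * (x ^ (1 / 2 : ℝ) * (1 - x) ^ (-1 / 2 : ℝ) +
      x ^ (-1 / 2 : ℝ) * (1 - x) ^ (1 / 2 : ℝ)) := by
    rw [kernelPrimitive, abs_mul, abs_two]
    gcongr
    exact (abs_sub _ _).trans (by rw [abs_of_pos (by positivity), abs_of_pos (by positivity)])
  calc |(1 - x ^ s - (1 - x) ^ s) * kernelPrimitive x|
      ≤ 2 * s * (x * (1 - x)) * (2 * (x ^ (1 / 2 : ℝ) * (1 - x) ^ (-1 / 2 : ℝ) +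
          x ^ (-1 / 2 : ℝ) * (1 - x) ^ (1 / 2 : ℝ))) := by
        rw [abs_mul, abs_of_nonneg (one_sub_rpow_sub_one_sub_rpow_nonneg hs
          (Ioo_subset_Icc_self hx))]
        gcongr
        exact one_sub_rpow_sub_one_sub_rpow_le hs (Ioo_subset_Icc_self hx)
    _ = _ := by
        rw [rpow_eq_rpow_mul_self hx₀.ne' (3 / 2) (1 / 2) (by norm_num),
          rpow_eq_rpow_mul_self hx₁.ne' (3 / 2) (1 / 2) (by norm_num),
          rpow_eq_rpow_mul_self hx₀.ne' (1 / 2) (-1 / 2) (by norm_num),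
          rpow_eq_rpow_mul_self hx₁.ne' (1 / 2) (-1 / 2) (by norm_num)]
        ring

theorem tendsto_one_sub_rpow_sub_one_sub_rpow_mul_kernelPrimitive {s a : ℝ} {l : Filter ℝ}
    (hs : 1 ≤ s) (ha : a = 0 ∨ a = 1) (hla : l ≤ 𝓝 a) (hl : Ioo 0 1 ∈ l) :
    Tendsto (fun x => (1 - x ^ s - (1 - x) ^ s) * kernelPrimitive x) l (𝓝 0) := by
  set g : ℝ → ℝ := fun x => 4 * s * (x ^ (3 / 2 : ℝ) * (1 - x) ^ (1 / 2 : ℝ) +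
    x ^ (1 / 2 : ℝ) * (1 - x) ^ (3 / 2 : ℝ))
  have hg : Continuous g := by fun_prop (disch := norm_num)
  have hga : g a = 0 := by rcases ha with rfl | rfl <;> norm_num [g]
  refine squeeze_zero_norm' ?_ (hga ▸ (hg.tendsto a).mono_left hla)
  filter_upwards [hl] with x hx
  exact abs_one_sub_rpow_sub_one_sub_rpow_mul_kernelPrimitive_le hs hx

theorem deriv_mul_kernelPrimitive_eq {s x : ℝ} (hx : x ∈ Ioo 0 1) :
    (s * (1 - x) ^ (s - 1) - s * x ^ (s - 1)) * kernelPrimitive x =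
      2 * s * (x ^ (1 / 2 : ℝ) * (1 - x) ^ (s - 3 / 2) - x ^ (-1 / 2 : ℝ) * (1 - x) ^ (s - 1 / 2)
        - x ^ (s - 1 / 2) * (1 - x) ^ (-1 / 2 : ℝ) + x ^ (s - 3 / 2) * (1 - x) ^ (1 / 2 : ℝ)) := by
  rw [show s - 3 / 2 = s - 1 + -1 / 2 by ring, show s - 1 / 2 = s - 1 + 1 / 2 by ring,
    rpow_add hx.1, rpow_add hx.1, rpow_add (sub_pos.2 hx.2), rpow_add (sub_pos.2 hx.2),
    kernelPrimitive]
  ring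

theorem integrableOn_deriv_mul_kernelPrimitive {s : ℝ} (hs : 1 / 2 < s) :
    IntegrableOn (fun x => (s * (1 - x) ^ (s - 1) - s * x ^ (s - 1)) * kernelPrimitive x)
      (Ioo 0 1) := by
  refine IntegrableOn.congr_fun ?_ (fun x hx => (deriv_mul_kernelPrimitive_eq hx).symm)
    measurableSet_Ioo
  have beta {p q : ℝ} (hp : -1 < p) (hq : -1 < q) := integrableOn_rpow_mul_one_sub_rpow hp hq
  exact ((((beta (p := 1 / 2) (q := s - 3 / 2) (by norm_num) (by linarith)).sub
    (beta (p := -1 / 2) (q := s - 1 / 2) (by norm_num) (by linarith))).sub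
    (beta (p := s - 1 / 2) (q := -1 / 2) (by linarith) (by norm_num))).add
    (beta (p := s - 3 / 2) (q := 1 / 2) (by linarith) (by norm_num))).const_mul (2 * s)

theorem integral_deriv_mul_kernelPrimitive {s : ℝ} (hs : 1 < s) :
    ∫ x in Ioo 0 1, (s * (1 - x) ^ (s - 1) - s * x ^ (s - 1)) * kernelPrimitive x =
      -(4 * √π * Gamma (s - 1 / 2) / Gamma (s - 1)) := by
  have i₁ := integrableOn_rpow_mul_one_sub_rpow (p := 1 / 2) (q := s - 3 / 2)
    (by norm_num) (by linarith)
  have i₂ := integrableOn_rpow_mul_one_sub_rpow (p := -1 / 2) (q := s - 1 / 2)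
    (by norm_num) (by linarith)
  have i₃ := integrableOn_rpow_mul_one_sub_rpow (p := s - 1 / 2) (q := -1 / 2)
    (by linarith) (by norm_num)
  have i₄ := integrableOn_rpow_mul_one_sub_rpow (p := s - 3 / 2) (q := 1 / 2)
    (by linarith) (by norm_num)
  rw [setIntegral_congr_fun measurableSet_Ioo (fun x hx => deriv_mul_kernelPrimitive_eq hx),
    integral_const_mul, integral_add ?_ i₄, integral_sub ?_ i₃, integral_sub i₁ i₂,
    integral_rpow_mul_one_sub_rpow (by norm_num) (by linarith),
    integral_rpow_mul_one_sub_rpow (by norm_num) (by linarith),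
    integral_rpow_mul_one_sub_rpow (by linarith) (by norm_num),
    integral_rpow_mul_one_sub_rpow (by linarith) (by norm_num)]
  · have hΓ_half : Gamma (-1 / 2 + 1) = √π := by norm_num [Gamma_one_half_eq]
    have hΓ_three_halves : Gamma (1 / 2 + 1) = √π / 2 := by
      rw [Gamma_add_one (by norm_num), Gamma_one_half_eq]; ring
    have hΓ_s_add_half : Gamma (s - 1 / 2 + 1) = (s - 1 / 2) * Gamma (s - 1 / 2) :=
      Gamma_add_one (by linarith)
    have hΓ_s_add_one : Gamma (s + 1) = s * (s - 1) * Gamma (s - 1) := by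
      rw [Gamma_add_one (by linarith), show s = s - 1 + 1 by ring, Gamma_add_one (by linarith)]
      ring_nf
    rw [show s - 3 / 2 + 1 = s - 1 / 2 by ring,
      show (1 / 2 : ℝ) + (s - 3 / 2) + 2 = s + 1 by ring,
      show (-1 / 2 : ℝ) + (s - 1 / 2) + 2 = s + 1 by ring,
      show s - 1 / 2 + (-1 / 2) + 2 = s + 1 by ring, show s - 3 / 2 + 1 / 2 + 2 = s + 1 by ring,
      hΓ_half, hΓ_three_halves, hΓ_s_add_half, hΓ_s_add_one]
    have : Gamma (s - 1) ≠ 0 := (Gamma_pos_of_pos (by linarith)).ne'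
    have : s - 1 ≠ 0 := sub_ne_zero.2 hs.ne'
    have : s ≠ 0 := by positivity
    field_simp
    ring
  · exact i₁.sub i₂
  · exact (i₁.sub i₂).sub i₃

theorem integral_one_sub_rpow_sub_one_sub_rpow_mul {s : ℝ} (hs : 1 < s) :
    ∫ x in Ioo 0 1, (1 - x ^ s - (1 - x) ^ s) * (x ^ (-3 / 2 : ℝ) * (1 - x) ^ (-3 / 2 : ℝ)) =
      4 * √π * Gamma (s - 1 / 2) / Gamma (s - 1) := by
  rw [integral_Ioo_mul_deriv_eq_neg_deriv_mul zero_lt_one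
    (fun x hx => hasDerivAt_one_sub_rpow_sub_one_sub_rpow hx)
    (fun x hx => hasDerivAt_kernelPrimitive hx)
    (integrableOn_one_sub_rpow_sub_one_sub_rpow_mul hs.le)
    (integrableOn_deriv_mul_kernelPrimitive (by linarith))
    (tendsto_one_sub_rpow_sub_one_sub_rpow_mul_kernelPrimitive hs.le (.inl rfl)
      nhdsWithin_le_nhds (Ioo_mem_nhdsGT zero_lt_one))
    (tendsto_one_sub_rpow_sub_one_sub_rpow_mul_kernelPrimitive hs.le (.inr rfl)
      nhdsWithin_le_nhds (Ioo_mem_nhdsLT zero_lt_one)),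
    integral_deriv_mul_kernelPrimitive hs, neg_neg]

theorem div_sqrt_two_pi_mul_pow_three_eq {x : ℝ} (hx : x ∈ Ioo 0 1) (y : ℝ) :
    y / √(2 * π * x ^ 3 * (1 - x) ^ 3) =
      y * (x ^ (-3 / 2 : ℝ) * (1 - x) ^ (-3 / 2 : ℝ)) / √(2 * π) := by
  have h (z : ℝ) (hz : 0 < z) : z ^ (-3 / 2 : ℝ) = (√(z ^ 3))⁻¹ := by
    rw [neg_div, rpow_neg hz.le, sqrt_eq_rpow, ← rpow_natCast, ← rpow_mul hz.le]
    norm_num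
  have hx₀ := hx.1
  have hx₁ := sub_pos.2 hx.2
  rw [h x hx₀, h (1 - x) hx₁, sqrt_mul (by positivity), sqrt_mul (by positivity)]
  field_simp

theorem two_rpow_three_halves : (2 : ℝ) ^ (3 / 2 : ℝ) = 4 / √2 := by
  rw [show (3 / 2 : ℝ) = 1 + 1 / 2 by norm_num, rpow_add two_pos, rpow_one, ← sqrt_eq_rpow,
    eq_div_iff (by positivity), mul_assoc, mul_self_sqrt zero_le_two]
  norm_num

/-- For every integer `k ≥ 1`, the function
`x ↦ (1 - x^{3k/2} - (1-x)^{3k/2}) / √(2π x³ (1-x)³)` is integrable on `(0,1)` and its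
integral equals `2^{3/2} Γ((3k-1)/2) / Γ(3k/2 - 1)`. -/
theorem stmt_4 (k : ℕ) (hk : 1 ≤ k) :
    IntegrableOn (fun x : ℝ =>
        (1 - x ^ (3 * (k : ℝ) / 2) - (1 - x) ^ (3 * (k : ℝ) / 2)) /
          Real.sqrt (2 * π * x ^ 3 * (1 - x) ^ 3)) (Set.Ioo 0 1) ∧
    (∫ x in Set.Ioo (0 : ℝ) 1,
        (1 - x ^ (3 * (k : ℝ) / 2) - (1 - x) ^ (3 * (k : ℝ) / 2)) /
          Real.sqrt (2 * π * x ^ 3 * (1 - x) ^ 3))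
      = 2 ^ ((3 : ℝ) / 2) * Real.Gamma ((3 * (k : ℝ) - 1) / 2) /
          Real.Gamma (3 * (k : ℝ) / 2 - 1) := by
  have hs : 1 < 3 * (k : ℝ) / 2 := by
    have : (1 : ℝ) ≤ k := by exact_mod_cast hk
    linarith
  set s := 3 * (k : ℝ) / 2
  have h_eq := fun x (hx : x ∈ Ioo (0 : ℝ) 1) =>
    div_sqrt_two_pi_mul_pow_three_eq hx (1 - x ^ s - (1 - x) ^ s)
  refine ⟨IntegrableOn.congr_fun
    ((integrableOn_one_sub_rpow_sub_one_sub_rpow_mul hs.le).div_const _)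
    (fun x hx => (h_eq x hx).symm) measurableSet_Ioo, ?_⟩
  rw [setIntegral_congr_fun measurableSet_Ioo h_eq, integral_div,
    integral_one_sub_rpow_sub_one_sub_rpow_mul hs, show (3 * (k : ℝ) - 1) / 2 = s - 1 / 2 by ring,
    two_rpow_three_halves, sqrt_mul zero_le_two]
  field_simp
end

section
/- For integers k ≥ 1 and 1 ≤ j ≤ k−1, set a_k = 2^{3/2} Γ((3k−1)/2) / Γ(3k/2 − 1) and a_{j,k} = k! Γ((3j−1)/2) Γ((3(k−j)−1)/2) / (√(2π) j! (k−j)! Γ(3k/2 − 1)). Let (M_k)_{k≥0} and (K_k)_{k≥0} be real sequences related by M_k = 4√π 2^{-k/2} k! K_k / Γ((3k−1)/2) for all k ≥ 0, with M_0 = 1 (equivalently K_0 = −1/2). Then (M_k) satisfies the recursion a_k M_k = k M_{k−1} + ∑_{j=1}^{k−1} a_{j,k} M_j M_{k−j} for all k ≥ 1 if and only if (K_k) satisfies Takács' recursion K_k = (3k/4 − 1) K_{k−1} + ∑_{j=1}^{k−1} K_j K_{k−j} for all k ≥ 1. -/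
/-!
Substituting `M_k = c_k K_k`, with `c_k = 4√π 2^{-k/2} k! / Γ((3k-1)/2)`, into the `k`-th moment
recursion turns each of its three terms into the corresponding term of Takács' recursion times
the same nonzero factor `2^{3/2} · 4√π 2^{-k/2} k! / Γ(3k/2 - 1)`. For the quadratic terms the
Gamma factors of `a_{j,k}` cancel those of `c_j c_{k-j}` outright; for the linear term,
`Γ(3k/2 - 1) = 2 (3k/4 - 1) Γ((3(k-1)-1)/2)` produces the coefficient `3k/4 - 1` of Takács'
recursion.
-/

open Real
open scoped Nat

namespace BrownianExcursionArea

lemma Gamma_three_mul_sub_one_div_two_ne_zero (j : ℕ) :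
    Gamma ((3 * (j : ℝ) - 1) / 2) ≠ 0 := by
  refine Gamma_ne_zero fun m h => ?_
  have : ((3 * j + 2 * m : ℕ) : ℝ) = 1 := by push_cast; linarith
  have : 3 * j + 2 * m = 1 := by exact_mod_cast this
  omega

lemma Gamma_three_mul_div_two_sub_one_pos {k : ℕ} (hk : 1 ≤ k) :
    0 < Gamma (3 * (k : ℝ) / 2 - 1) := by
  have : (1 : ℝ) ≤ k := by exact_mod_cast hk
  exact Gamma_pos_of_pos (by linarith)

lemma three_mul_div_four_sub_one_ne_zero (k : ℕ) : 3 * (k : ℝ) / 4 - 1 ≠ 0 := by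
  intro h
  have : ((3 * k : ℕ) : ℝ) = 4 := by push_cast; linarith
  have : 3 * k = 4 := by exact_mod_cast this
  omega

lemma Gamma_three_mul_div_two_sub_one_eq {k : ℕ} (hk : 1 ≤ k) :
    Gamma (3 * (k : ℝ) / 2 - 1) =
      (2 * (3 * (k : ℝ) / 4 - 1)) * Gamma ((3 * ((k - 1 : ℕ) : ℝ) - 1) / 2) := by
  rw [show 3 * (k : ℝ) / 2 - 1 = 2 * (3 * (k : ℝ) / 4 - 1) + 1 by ring,
    Gamma_add_one (mul_ne_zero two_ne_zero (three_mul_div_four_sub_one_ne_zero k)),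
    Nat.cast_sub hk, Nat.cast_one]
  ring_nf

lemma two_rpow_neg_sub_one_div_two {k : ℕ} (hk : 1 ≤ k) :
    (2 : ℝ) ^ (-((k - 1 : ℕ) : ℝ) / 2) = 2 ^ (-(k : ℝ) / 2) * √2 := by
  rw [sqrt_eq_rpow, ← rpow_add two_pos, Nat.cast_sub hk, Nat.cast_one]
  ring_nf

lemma two_rpow_three_halves : (2 : ℝ) ^ (3 / 2 : ℝ) = 2 * √2 := by
  rw [show (3 / 2 : ℝ) = 1 + 1 / 2 by norm_num, rpow_add two_pos, rpow_one, sqrt_eq_rpow]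

noncomputable def recursionFactor (k : ℕ) : ℝ :=
  2 ^ (3 / 2 : ℝ) * (4 * √π) * 2 ^ (-(k : ℝ) / 2) * k ! / Gamma (3 * (k : ℝ) / 2 - 1)

lemma recursionFactor_ne_zero {k : ℕ} (hk : 1 ≤ k) : recursionFactor k ≠ 0 := by
  have := Gamma_three_mul_div_two_sub_one_pos hk
  unfold recursionFactor
  positivity

section Terms

variable {M K : ℕ → ℝ}
  (hMK : ∀ k : ℕ,
    M k = 4 * √π * 2 ^ (-(k : ℝ) / 2) * k ! * K k / Gamma ((3 * (k : ℝ) - 1) / 2))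
include hMK

lemma leading_term_eq (k : ℕ) :
    (2 ^ (3 / 2 : ℝ) * Gamma ((3 * (k : ℝ) - 1) / 2) / Gamma (3 * (k : ℝ) / 2 - 1)) * M k =
      recursionFactor k * K k := by
  have := Gamma_three_mul_sub_one_div_two_ne_zero k
  rw [hMK, recursionFactor]
  field_simp

lemma linear_term_eq {k : ℕ} (hk : 1 ≤ k) :
    (k : ℝ) * M (k - 1) = recursionFactor k * ((3 * (k : ℝ) / 4 - 1) * K (k - 1)) := by
  have hGc := Gamma_three_mul_sub_one_div_two_ne_zero (k - 1)
  have hc := three_mul_div_four_sub_one_ne_zero k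
  rw [hMK, recursionFactor, Gamma_three_mul_div_two_sub_one_eq hk, two_rpow_three_halves,
    two_rpow_neg_sub_one_div_two hk, ← Nat.mul_factorial_pred (by omega : k ≠ 0), Nat.cast_mul]
  -- as an atom, `field_simp` can cancel `3k/4 - 1` using `hc` instead of expanding it
  set c := 3 * (k : ℝ) / 4 - 1
  field_simp

lemma quadratic_term_eq {j k : ℕ} (hjk : j ≤ k) :
    ((k ! : ℝ) * Gamma ((3 * (j : ℝ) - 1) / 2) * Gamma ((3 * ((k : ℝ) - (j : ℝ)) - 1) / 2) /
        (√(2 * π) * (j ! : ℝ) * ((k - j) ! : ℝ) * Gamma (3 * (k : ℝ) / 2 - 1))) *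
        M j * M (k - j) =
      recursionFactor k * (K j * K (k - j)) := by
  have hGj := Gamma_three_mul_sub_one_div_two_ne_zero j
  have hGkj := Gamma_three_mul_sub_one_div_two_ne_zero (k - j)
  have hpow :
      (2 : ℝ) ^ (-(j : ℝ) / 2) * 2 ^ (-((k - j : ℕ) : ℝ) / 2) = 2 ^ (-(k : ℝ) / 2) := by
    rw [← rpow_add two_pos, Nat.cast_sub hjk]
    ring_nf
  rw [Nat.cast_sub hjk] at hGkj
  rw [hMK, hMK, recursionFactor, ← hpow, two_rpow_three_halves, sqrt_mul zero_le_two,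
    Nat.cast_sub hjk]
  field_simp
  rw [sq_sqrt zero_le_two]
  ring

end Terms

end BrownianExcursionArea

open BrownianExcursionArea

theorem stmt_6_general (M K : ℕ → ℝ)
    (hMK : ∀ k : ℕ, M k = 4 * Real.sqrt π * 2 ^ (-(k : ℝ) / 2) * (Nat.factorial k) * K k /
      Real.Gamma ((3 * (k : ℝ) - 1) / 2)) :
    (∀ k : ℕ, 1 ≤ k →
        (2 ^ ((3 : ℝ) / 2) * Real.Gamma ((3 * (k : ℝ) - 1) / 2) /
            Real.Gamma (3 * (k : ℝ) / 2 - 1)) * M k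
          = (k : ℝ) * M (k - 1) +
            ∑ j ∈ Finset.Icc 1 (k - 1),
              ((Nat.factorial k : ℝ) * Real.Gamma ((3 * (j : ℝ) - 1) / 2) *
                  Real.Gamma ((3 * ((k : ℝ) - (j : ℝ)) - 1) / 2) /
                (Real.sqrt (2 * π) * (Nat.factorial j : ℝ) * (Nat.factorial (k - j) : ℝ) *
                  Real.Gamma (3 * (k : ℝ) / 2 - 1))) * M j * M (k - j))
    ↔ (∀ k : ℕ, 1 ≤ k →
        K k = (3 * (k : ℝ) / 4 - 1) * K (k - 1) +
          ∑ j ∈ Finset.Icc 1 (k - 1), K j * K (k - j)) := by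
  refine forall₂_congr fun k hk => ?_
  rw [leading_term_eq hMK, linear_term_eq hMK hk,
    Finset.sum_congr rfl fun j hj =>
      quadratic_term_eq hMK ((Finset.mem_Icc.1 hj).2.trans (k.sub_le 1)),
    ← Finset.mul_sum, ← mul_add, mul_right_inj' (recursionFactor_ne_zero hk)]

/-- With `a_k = 2^{3/2} Γ((3k-1)/2)/Γ(3k/2-1)` and
`a_{j,k} = k! Γ((3j-1)/2) Γ((3(k-j)-1)/2)/(√(2π) j! (k-j)! Γ(3k/2-1))`, and sequences
related by `M_k = 4√π 2^{-k/2} k! K_k / Γ((3k-1)/2)` with `M_0 = 1`, the recursion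
`a_k M_k = k M_{k-1} + ∑_{j=1}^{k-1} a_{j,k} M_j M_{k-j}` holds for all `k ≥ 1` if and
only if Takács' recursion `K_k = (3k/4 - 1) K_{k-1} + ∑_{j=1}^{k-1} K_j K_{k-j}` does. -/
theorem stmt_6 (M K : ℕ → ℝ)
    (hMK : ∀ k : ℕ, M k = 4 * Real.sqrt π * 2 ^ (-(k : ℝ) / 2) * (Nat.factorial k) * K k /
      Real.Gamma ((3 * (k : ℝ) - 1) / 2))
    (hM0 : M 0 = 1) :
    (∀ k : ℕ, 1 ≤ k →
        (2 ^ ((3 : ℝ) / 2) * Real.Gamma ((3 * (k : ℝ) - 1) / 2) /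
            Real.Gamma (3 * (k : ℝ) / 2 - 1)) * M k
          = (k : ℝ) * M (k - 1) +
            ∑ j ∈ Finset.Icc 1 (k - 1),
              ((Nat.factorial k : ℝ) * Real.Gamma ((3 * (j : ℝ) - 1) / 2) *
                  Real.Gamma ((3 * ((k : ℝ) - (j : ℝ)) - 1) / 2) /
                (Real.sqrt (2 * π) * (Nat.factorial j : ℝ) * (Nat.factorial (k - j) : ℝ) *
                  Real.Gamma (3 * (k : ℝ) / 2 - 1))) * M j * M (k - j))
    ↔ (∀ k : ℕ, 1 ≤ k →
        K k = (3 * (k : ℝ) / 4 - 1) * K (k - 1) +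
          ∑ j ∈ Finset.Icc 1 (k - 1), K j * K (k - j)) :=
  stmt_6_general M K hMK
end
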